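/- arXiv:2111.14594 — 3 statements merged into one kernel-verified Lean document; each statement's English description precedes it below -/
import Mathlib

section
/- Let V be a vector space over ℂ (or any field of characteristic ≠ 2) and let K₁, …, K_m be linear endomorphisms of V with K_j ∘ K_j = id for every j, such that for each j ≥ 2 the operator K_j commutes with the product K_{j-1} ∘ ⋯ ∘ K₁. For signs s₁, …, s_m ∈ {1, -1} define the measurement projectors Π_j = (1/2) • (id + s_j • K_j), and set S = K_m ∘ ⋯ ∘ K₁. Then S ∘ Π_m ∘ ⋯ ∘ Π₁ = (∏_{j=1}^m s_j) • (Π_m ∘ ⋯ ∘ Π₁). In particular, any nonzero vector φ = Π_m(⋯(Π₁ ψ)) obtained after sequentially measuring K₁, …, K_m with outcomes s₁, …, s_m is an eigenvector of S with eigenvalue ∏_j s_j, so the measurement outcome of the stabilizer S can be reconstructed as the classical product of the gauge-operator measurement outcomes. -/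
/-- The projector `(1/2) • (id + s • K)` corresponding to measuring the involution `K`
with outcome `s ∈ {+1, -1}`. -/
noncomputable def measProj (V : Type*) [AddCommGroup V] [Module ℂ V]
    (s : ℂ) (K : Module.End ℂ V) : Module.End ℂ V :=
  (1 / 2 : ℂ) • (1 + s • K)

/-- If `K 0, …, K (m-1)` are involutive endomorphisms such that each `K j` (for `j ≥ 1`)
commutes with the product `K (j-1) * ⋯ * K 0` of its predecessors, and
`s 0, …, s (m-1)` are signs in `{1, -1}`, then with `S = K (m-1) * ⋯ * K 0` and
projectors `Π j = (1/2) • (1 + s j • K j)` one has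
`S ∘ Π (m-1) ∘ ⋯ ∘ Π 0 = (∏ j, s j) • (Π (m-1) ∘ ⋯ ∘ Π 0)`; in particular, any nonzero
vector obtained after sequentially measuring `K 0, …, K (m-1)` with outcomes
`s 0, …, s (m-1)` is an eigenvector of `S` with eigenvalue `∏ j, s j`. -/
theorem stabilizer_outcome_from_gauge_measurements
    (V : Type*) [AddCommGroup V] [Module ℂ V] (m : ℕ) (K : ℕ → Module.End ℂ V)
    (hinv : ∀ j < m, K j * K j = 1)
    (hcomm : ∀ j, 1 ≤ j → j < m →
      Commute (K j) (((List.range j).reverse.map K).prod))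
    (s : ℕ → ℂ) (hs : ∀ j < m, s j = 1 ∨ s j = -1) :
    ((List.range m).reverse.map K).prod *
        ((List.range m).reverse.map (fun j => measProj V (s j) (K j))).prod =
      (∏ j ∈ Finset.range m, s j) •
        ((List.range m).reverse.map (fun j => measProj V (s j) (K j))).prod ∧
    ∀ ψ : V,
      ((List.range m).reverse.map (fun j => measProj V (s j) (K j))).prod ψ ≠ 0 →
      (((List.range m).reverse.map K).prod)
          (((List.range m).reverse.map (fun j => measProj V (s j) (K j))).prod ψ) =
        (∏ j ∈ Finset.range m, s j) •
          (((List.range m).reverse.map (fun j => measProj V (s j) (K j))).prod ψ) := by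

  have key : ∀ n, n ≤ m →
      ((List.range n).reverse.map K).prod *
        ((List.range n).reverse.map (fun j => measProj V (s j) (K j))).prod =
      (∏ j ∈ Finset.range n, s j) •
        ((List.range n).reverse.map (fun j => measProj V (s j) (K j))).prod := by
    intro n hn
    induction n with
    | zero => simp
    | succ n ih =>
      have hnm : n < m := lt_of_lt_of_le (Nat.lt_succ_self n) hn
      have ih' := ih (le_of_lt hnm)
      have hKn : K n * K n = 1 := hinv n hnm
      have hsn : s n * s n = 1 := by
        rcases hs n hnm with h | h <;> rw [h] <;> ring
      set Sn := ((List.range n).reverse.map K).prod with hSn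
      set Pn := ((List.range n).reverse.map (fun j => measProj V (s j) (K j))).prod with hPn
      set P := measProj V (s n) (K n) with hP
      have hrangeK : ((List.range (n+1)).reverse.map K).prod = K n * Sn := by
        rw [hSn, List.range_succ, List.reverse_append]; simp
      have hrangeP : ((List.range (n+1)).reverse.map
          (fun j => measProj V (s j) (K j))).prod = P * Pn := by
        rw [hPn, List.range_succ, List.reverse_append]; simp [hP]
      have hKP : K n * P = s n • P := by
        rw [hP]
        unfold measProj
        rw [mul_smul_comm, smul_comm (s n) ((1:ℂ)/2)]
        congr 1
        rw [mul_add, mul_one, mul_smul_comm, hKn, smul_add, smul_smul, hsn, one_smul]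
        exact add_comm _ _
      have hcommKS : Commute (K n) Sn := by
        rcases Nat.eq_zero_or_pos n with h | h
        · subst h; simp [hSn]
        · exact hcomm n h hnm
      have hcommSP : Commute Sn P := by
        rw [hP]; unfold measProj
        exact (Commute.add_right (Commute.one_right Sn)
          (Commute.smul_right hcommKS.symm (s n))).smul_right _
      rw [hrangeK, hrangeP, Finset.prod_range_succ]
      calc K n * Sn * (P * Pn) = K n * (Sn * P) * Pn := by noncomm_ring
        _ = K n * (P * Sn) * Pn := by rw [hcommSP]
        _ = (K n * P) * (Sn * Pn) := by noncomm_ring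
        _ = (s n • P) * ((∏ j ∈ Finset.range n, s j) • Pn) := by rw [hKP, ih']
        _ = ((∏ j ∈ Finset.range n, s j) * s n) • (P * Pn) := by
              rw [smul_mul_smul_comm]; ring_nf
  have h1 := key m le_rfl
  refine ⟨h1, fun ψ _ => ?_⟩
  have := congrArg (fun f : Module.End ℂ V => f ψ) h1
  simpa using this
end

section
/- Let F₂ = ZMod 2, let V = (Fin n → F₂) × (Fin n → F₂) with the symplectic bilinear form ω((a,b),(a',b')) = a·b' + a'·b, and let E ⊆ Fin n with V_E = {(a,b) ∈ V : a i = 0 and b i = 0 for all i ∉ E}. Then for every subspace S ≤ V, the subspace of zero-syndrome errors supported in E satisfies finrank(V_E ⊓ S^⊥) = 2·|E| − finrank(π_E(S)), where π_E is the coordinate projection onto E and S^⊥ = {v ∈ V : ω(v,w) = 0 for all w ∈ S}. -/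
open Module

/-- The `F₂`-vector space `(Fin n → F₂) × (Fin n → F₂)` representing the `n`-qubit
Pauli group modulo phases: `(a, b)` represents `X^a Z^b`. -/
abbrev PauliSp (n : ℕ) := (Fin n → ZMod 2) × (Fin n → ZMod 2)

/-- The symplectic bilinear form `ω((a,b),(a',b')) = a·b' + a'·b` on `PauliSp n`. -/
def omegaBilin (n : ℕ) : PauliSp n →ₗ[ZMod 2] PauliSp n →ₗ[ZMod 2] ZMod 2 :=
  LinearMap.mk₂ (ZMod 2)
    (fun v w => (∑ i, v.1 i * w.2 i) + (∑ i, w.1 i * v.2 i))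
    (by
      intro v v' w
      simp [add_mul, mul_add, Finset.sum_add_distrib]
      ring)
    (by
      intro c v w
      simp [smul_eq_mul, mul_assoc, mul_left_comm, Finset.mul_sum, mul_add])
    (by
      intro v w w'
      simp [add_mul, mul_add, Finset.sum_add_distrib]
      ring)
    (by
      intro c v w
      simp [smul_eq_mul, mul_assoc, mul_left_comm, Finset.mul_sum, mul_add])

/-- The symplectic complement `W^⊥ = {v | ω(v, w) = 0 for all w ∈ W}` of a subspace `W`,
corresponding to the centralizer in the Pauli group. -/
def sperp {n : ℕ} (W : Submodule (ZMod 2) (PauliSp n)) : Submodule (ZMod 2) (PauliSp n) where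
  carrier := {v | ∀ w ∈ W, omegaBilin n v w = 0}
  zero_mem' := by intro w hw; simp
  add_mem' := by
    intro a b ha hb w hw
    rw [map_add, LinearMap.add_apply, ha w hw, hb w hw, add_zero]
  smul_mem' := by
    intro c a ha w hw
    rw [map_smul, LinearMap.smul_apply, ha w hw, smul_zero]

/-- `V_E`: the subspace of Pauli errors supported in the erasure pattern `E`. -/
def suppIn (n : ℕ) (E : Finset (Fin n)) : Submodule (ZMod 2) (PauliSp n) where
  carrier := {v | ∀ i, i ∉ E → v.1 i = 0 ∧ v.2 i = 0}
  zero_mem' := by intro i _; simp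
  add_mem' := by
    intro a b ha hb i hi
    have h1 := ha i hi; have h2 := hb i hi
    constructor
    · simp [h1.1, h2.1]
    · simp [h1.2, h2.2]
  smul_mem' := by
    intro c a ha i hi
    have h := ha i hi
    constructor
    · simp [h.1]
    · simp [h.2]

/-- `π_E`: the coordinate projection onto the qubits in `E`. -/
def projE (n : ℕ) (E : Finset (Fin n)) :
    PauliSp n →ₗ[ZMod 2] ((E → ZMod 2) × (E → ZMod 2)) :=
  LinearMap.prodMap
    (LinearMap.funLeft (ZMod 2) (ZMod 2) (fun i : E => (i : Fin n)))
    (LinearMap.funLeft (ZMod 2) (ZMod 2) (fun i : E => (i : Fin n)))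

section Aux

variable (n : ℕ) (E : Finset (Fin n))

/-- Extension by zero on one factor. -/
def extFun : (E → ZMod 2) →ₗ[ZMod 2] (Fin n → ZMod 2) where
  toFun x := fun i => if h : i ∈ E then x ⟨i, h⟩ else 0
  map_add' x y := by funext i; by_cases h : i ∈ E <;> simp [h]
  map_smul' c x := by funext i; by_cases h : i ∈ E <;> simp [h]

/-- Extension by zero. -/
def extE : ((E → ZMod 2) × (E → ZMod 2)) →ₗ[ZMod 2] PauliSp n :=
  LinearMap.prodMap (extFun n E) (extFun n E)

/-- The symplectic form on the `E`-coordinates. -/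
def omegaE : LinearMap.BilinForm (ZMod 2) ((E → ZMod 2) × (E → ZMod 2)) :=
  LinearMap.mk₂ (ZMod 2)
    (fun v w => (∑ i, v.1 i * w.2 i) + (∑ i, w.1 i * v.2 i))
    (by intro v v' w; simp [add_mul, mul_add, Finset.sum_add_distrib]; ring)
    (by intro c v w; simp [smul_eq_mul, mul_assoc, mul_left_comm, Finset.mul_sum, mul_add])
    (by intro v w w'; simp [add_mul, mul_add, Finset.sum_add_distrib]; ring)
    (by intro c v w; simp [smul_eq_mul, mul_assoc, mul_left_comm, Finset.mul_sum, mul_add])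

lemma projE_extE (x : (E → ZMod 2) × (E → ZMod 2)) : projE n E (extE n E x) = x := by
  refine Prod.ext (funext fun i => ?_) (funext fun i => ?_) <;>
    simp [projE, extE, extFun, LinearMap.funLeft, i.2]

lemma extE_mem_suppIn (x : (E → ZMod 2) × (E → ZMod 2)) : extE n E x ∈ suppIn n E := by
  intro i hi
  constructor <;> simp [extE, extFun, hi]

lemma extE_projE {v : PauliSp n} (hv : v ∈ suppIn n E) : extE n E (projE n E v) = v := by
  refine Prod.ext (funext fun i => ?_) (funext fun i => ?_)
  · by_cases h : i ∈ E
    · simp [extE, extFun, projE, LinearMap.funLeft, h]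
    · simp only [extE, extFun, LinearMap.prodMap_apply, LinearMap.coe_mk, AddHom.coe_mk,
        dif_neg h]
      exact ((hv i h).1).symm
  · by_cases h : i ∈ E
    · simp [extE, extFun, projE, LinearMap.funLeft, h]
    · simp only [extE, extFun, LinearMap.prodMap_apply, LinearMap.coe_mk, AddHom.coe_mk,
        dif_neg h]
      exact ((hv i h).2).symm

lemma omega_extE (x : (E → ZMod 2) × (E → ZMod 2)) (w : PauliSp n) :
    omegaBilin n (extE n E x) w = omegaE n E x (projE n E w) := by
  have key : ∀ (a : E → ZMod 2) (b : Fin n → ZMod 2),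
      (∑ i, extFun n E a i * b i) = ∑ i : E, a i * b i := by
    intro a b
    calc (∑ i, extFun n E a i * b i) = ∑ i ∈ E, extFun n E a i * b i :=
          (Finset.sum_subset (Finset.subset_univ E)
            (fun i _ hi => by simp [extFun, hi])).symm
      _ = ∑ i : E, extFun n E a i * b i := (Finset.sum_coe_sort E _).symm
      _ = ∑ i : E, a i * b i := Finset.sum_congr rfl fun i _ => by simp [extFun, i.2]
  have key2 : ∀ (a : Fin n → ZMod 2) (b : E → ZMod 2),
      (∑ i, a i * extFun n E b i) = ∑ i : E, a i * b i := by
    intro a b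
    calc (∑ i, a i * extFun n E b i) = ∑ i ∈ E, a i * extFun n E b i :=
          (Finset.sum_subset (Finset.subset_univ E)
            (fun i _ hi => by simp [extFun, hi])).symm
      _ = ∑ i : E, a i * extFun n E b i := (Finset.sum_coe_sort E _).symm
      _ = ∑ i : E, a i * b i := Finset.sum_congr rfl fun i _ => by simp [extFun, i.2]
  simp only [omegaBilin, omegaE, extE, LinearMap.mk₂_apply, LinearMap.prodMap_apply,
    projE, LinearMap.funLeft_apply]
  rw [key, key2]

lemma omegaE_isRefl : (omegaE n E).IsRefl := by
  intro x y h
  simpa [omegaE, add_comm] using h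

lemma omegaE_nondegenerate : (omegaE n E).Nondegenerate := by
  refine LinearMap.BilinForm.Nondegenerate.ofSeparatingLeft ?_
  intro x hx
  refine Prod.ext (funext fun i => ?_) (funext fun i => ?_)
  · have := hx (0, Pi.single i 1)
    simpa [omegaE, Pi.single_apply, Finset.sum_ite_eq', mul_comm] using this
  · have := hx (Pi.single i 1, 0)
    simpa [omegaE, Pi.single_apply, Finset.sum_ite_eq', mul_comm] using this

end Aux

/-- The subspace of zero-syndrome errors supported in the erasure pattern `E`
satisfies `finrank (V_E ⊓ S^⊥) = 2·|E| − finrank (π_E S)`. -/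
theorem finrank_zero_syndrome_supported (n : ℕ) (E : Finset (Fin n))
    (S : Submodule (ZMod 2) (PauliSp n)) :
    finrank (ZMod 2) ↥(suppIn n E ⊓ sperp S) =
      2 * E.card - finrank (ZMod 2) ↥(S.map (projE n E)) := by
  classical
  have hinj : Function.Injective (extE n E) :=
    Function.LeftInverse.injective (projE_extE n E)
  have hmap : ((omegaE n E).orthogonal (S.map (projE n E))).map (extE n E)
      = suppIn n E ⊓ sperp S := by
    apply le_antisymm
    · rintro _ ⟨x, hx, rfl⟩
      refine ⟨extE_mem_suppIn n E x, fun w hw => ?_⟩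
      rw [omega_extE]
      exact omegaE_isRefl n E _ _ (hx _ ⟨w, hw, rfl⟩)
    · rintro v ⟨hv1, hv2⟩
      refine ⟨projE n E v, ?_, extE_projE n E hv1⟩
      rintro _ ⟨w, hw, rfl⟩
      apply omegaE_isRefl n E
      rw [← omega_extE, extE_projE n E hv1]
      exact hv2 w hw
  rw [← hmap]
  rw [← LinearEquiv.finrank_eq
    (Submodule.equivMapOfInjective (extE n E) hinj
      ((omegaE n E).orthogonal (S.map (projE n E))))]
  rw [LinearMap.BilinForm.finrank_orthogonal (omegaE_nondegenerate n E)]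
  congr 1
  simp [Module.finrank_prod, Module.finrank_pi, two_mul]
end

section
/- Let F₂ = ZMod 2, let V = (Fin n → F₂) × (Fin n → F₂) with the symplectic form ω((a,b),(a',b')) = a·b' + a'·b, let G ≤ V be a subspace (the gauge subspace) and S = G ⊓ G^⊥ (the stabilizer subspace). For every E ⊆ Fin n, with V_E the errors supported in E and π_Ē the projection onto the coordinates outside E: (i) G ⊓ V_E ≤ V_E ⊓ S^⊥, i.e., every gauge element supported in E has zero syndrome; and (ii) finrank(G) − finrank(π_Ē(G)) ≤ 2·|E| − finrank(π_E(S)). -/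
set_option synthInstance.maxHeartbeats 1000000
set_option maxHeartbeats 1000000


open Module

/- auxiliary material -/

abbrev PSaux (ι : Type*) := (ι → ZMod 2) × (ι → ZMod 2)

def symB (ι : Type*) [Fintype ι] : PSaux ι →ₗ[ZMod 2] PSaux ι →ₗ[ZMod 2] ZMod 2 :=
  LinearMap.mk₂ (ZMod 2)
    (fun v w => (∑ i, v.1 i * w.2 i) + (∑ i, w.1 i * v.2 i))
    (by intro v v' w; simp [add_mul, mul_add, Finset.sum_add_distrib]; ring)
    (by intro c v w; simp [smul_eq_mul, mul_assoc, mul_left_comm, Finset.mul_sum, mul_add])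
    (by intro v w w'; simp [add_mul, mul_add, Finset.sum_add_distrib]; ring)
    (by intro c v w; simp [smul_eq_mul, mul_assoc, mul_left_comm, Finset.mul_sum, mul_add])

lemma symB_symm (ι : Type*) [Fintype ι] (v w : PSaux ι) : symB ι v w = symB ι w v := by
  simp [symB, add_comm]

lemma symB_refl (ι : Type*) [Fintype ι] : LinearMap.IsRefl (symB ι) := by
  intro v w h; rw [symB_symm] at h; exact h

lemma symB_nondeg (ι : Type*) [Fintype ι] [DecidableEq ι] :
    LinearMap.BilinForm.Nondegenerate (symB ι) := by
  have hL : ∀ v : PSaux ι, (∀ w, symB ι v w = 0) → v = 0 := by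
    intro v hv
    ext i
    · have := hv (0, Pi.single i 1)
      simpa [symB, Pi.single_apply, mul_ite, ite_mul, Finset.sum_ite_eq'] using this
    · have := hv (Pi.single i 1, 0)
      simpa [symB, Pi.single_apply, mul_ite, ite_mul, Finset.sum_ite_eq'] using this
  exact ⟨hL, fun w hw => hL w (fun v => by rw [symB_symm]; exact hw v)⟩

lemma omega_symm {n : ℕ} (v w : PauliSp n) : omegaBilin n v w = omegaBilin n w v := by
  simp [omegaBilin, add_comm]

lemma omega_eq_symB {n : ℕ} {E : Finset (Fin n)} {v : PauliSp n} (u : PauliSp n)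
    (hv : v ∈ suppIn n E) :
    omegaBilin n v u = symB E (projE n E v) (projE n E u) := by
  have h1 : ∑ i : E, v.1 i * u.2 i = ∑ i, v.1 i * u.2 i := by
    rw [Finset.sum_coe_sort E (fun i => v.1 i * u.2 i)]
    exact Finset.sum_subset E.subset_univ (fun i _ hi => by rw [(hv i hi).1, zero_mul])
  have h2 : ∑ i : E, u.1 i * v.2 i = ∑ i, u.1 i * v.2 i := by
    rw [Finset.sum_coe_sort E (fun i => u.1 i * v.2 i)]
    exact Finset.sum_subset E.subset_univ (fun i _ hi => by rw [(hv i hi).2, mul_zero])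
  simp only [omegaBilin, symB, projE, LinearMap.mk₂_apply, LinearMap.prodMap_apply,
    LinearMap.funLeft_apply]
  rw [h1, h2]

lemma projE_zero_iff {n : ℕ} {E : Finset (Fin n)} {v : PauliSp n} :
    projE n E v = 0 ↔ ∀ i ∈ E, v.1 i = 0 ∧ v.2 i = 0 := by
  constructor
  · intro h i hi
    have h1 := congrFun (congrArg Prod.fst h) ⟨i, hi⟩
    have h2 := congrFun (congrArg Prod.snd h) ⟨i, hi⟩
    exact ⟨h1, h2⟩
  · intro h
    ext i
    · exact (h i i.2).1
    · exact (h i i.2).2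

/-- For a subsystem code with gauge subspace `G` and stabilizer `S = G ⊓ G^⊥`:
(i) every gauge element supported in the erasure pattern `E` has zero syndrome,
i.e. `G ⊓ V_E ≤ V_E ⊓ S^⊥`; and
(ii) `finrank G − finrank (π_Ē G) ≤ 2·|E| − finrank (π_E S)`. -/
theorem gauge_supported_in_erasure (n : ℕ) (E : Finset (Fin n))
    (G : Submodule (ZMod 2) (PauliSp n)) :
    G ⊓ suppIn n E ≤ suppIn n E ⊓ sperp (G ⊓ sperp G) ∧
    finrank (ZMod 2) ↥G - finrank (ZMod 2) ↥(G.map (projE n Eᶜ)) ≤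
      2 * E.card - finrank (ZMod 2) ↥((G ⊓ sperp G).map (projE n E)) := by
  constructor
  · rintro v ⟨hvG, hvE⟩
    refine ⟨hvE, ?_⟩
    rintro w ⟨hwG, hwP⟩
    rw [omega_symm]
    exact hwP v hvG
  · set S := G ⊓ sperp G with hS
    -- Step A : rank-nullity for projection onto Eᶜ
    have hA : finrank (ZMod 2) ↥(G.map (projE n Eᶜ)) + finrank (ZMod 2) ↥(G ⊓ suppIn n E)
        = finrank (ZMod 2) ↥G := by
      have hrn := LinearMap.finrank_range_add_finrank_ker ((projE n Eᶜ).comp G.subtype)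
      have hrange : LinearMap.range ((projE n Eᶜ).comp G.subtype) = G.map (projE n Eᶜ) := by
        rw [LinearMap.range_comp, Submodule.range_subtype]
      have hker : LinearMap.ker ((projE n Eᶜ).comp G.subtype)
          = Submodule.comap G.subtype (G ⊓ suppIn n E) := by
        ext ⟨v, hv⟩
        simp only [LinearMap.mem_ker, LinearMap.comp_apply, Submodule.coe_subtype,
          Submodule.mem_comap, Submodule.mem_inf]
        rw [projE_zero_iff]
        constructor
        · intro h
          refine ⟨hv, fun i hi => h i (by simpa using hi)⟩
        · intro h i hi
          exact h.2 i (by simpa using hi)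
      have e1 : finrank (ZMod 2) ↥(Submodule.comap G.subtype (G ⊓ suppIn n E))
          = finrank (ZMod 2) ↥(G ⊓ suppIn n E) :=
        (Submodule.comapSubtypeEquivOfLe (inf_le_left : G ⊓ suppIn n E ≤ G)).finrank_eq
      rw [hrange, hker, e1] at hrn
      exact hrn
    -- Step B : projE n E is injective on G ⊓ suppIn n E
    have hB : finrank (ZMod 2) ↥(G ⊓ suppIn n E)
        = finrank (ZMod 2) ↥((G ⊓ suppIn n E).map (projE n E)) := by
      have hinj : Function.Injective ((projE n E).comp (G ⊓ suppIn n E).subtype) := by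
        rw [← LinearMap.ker_eq_bot, eq_bot_iff]
        rintro ⟨v, hvG, hvE⟩ hv
        simp only [LinearMap.mem_ker, LinearMap.comp_apply, Submodule.coe_subtype] at hv
        rw [projE_zero_iff] at hv
        have : v = 0 := by
          ext i
          · by_cases hi : i ∈ E
            · exact (hv i hi).1
            · exact (hvE i hi).1
          · by_cases hi : i ∈ E
            · exact (hv i hi).2
            · exact (hvE i hi).2
        simp [this]
      have := LinearMap.finrank_range_of_inj hinj
      rw [LinearMap.range_comp, Submodule.range_subtype] at this
      exact this.symm
    -- Step C : orthogonality
    have hle : (G ⊓ suppIn n E).map (projE n E)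
        ≤ LinearMap.BilinForm.orthogonal (symB E) (S.map (projE n E)) := by
      rintro _ ⟨v, ⟨hvG, hvE⟩, rfl⟩
      rw [LinearMap.BilinForm.mem_orthogonal_iff]
      rintro _ ⟨s, hs, rfl⟩
      show symB E (projE n E s) (projE n E v) = 0
      rw [← symB_symm, ← omega_eq_symB _ hvE, omega_symm]
      exact hs.2 v hvG
    have hfin : finrank (ZMod 2) ↥(LinearMap.BilinForm.orthogonal (symB E)
          (S.map (projE n E)))
        = finrank (ZMod 2) ((E → ZMod 2) × (E → ZMod 2))
          - finrank (ZMod 2) ↥(S.map (projE n E)) :=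
      LinearMap.BilinForm.finrank_orthogonal (symB_nondeg E) _
    have hdim : finrank (ZMod 2) ((E → ZMod 2) × (E → ZMod 2)) = 2 * E.card := by
      rw [Module.finrank_prod, Module.finrank_pi, Fintype.card_coe]
      ring
    have hmono : finrank (ZMod 2) ↥((G ⊓ suppIn n E).map (projE n E))
        ≤ finrank (ZMod 2) ↥(LinearMap.BilinForm.orthogonal (symB E)
          (S.map (projE n E))) := Submodule.finrank_mono hle
    have hSle : finrank (ZMod 2) ↥(S.map (projE n E))
        ≤ finrank (ZMod 2) ((E → ZMod 2) × (E → ZMod 2)) :=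
      (S.map (projE n E)).finrank_le
    omega
end
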